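/- Let S be an invertible matrix such that S or −S is totally sign-alternating (i.e., D S D is totally nonnegative where D = diag((−1)^{i+1})). If A has n positive simple pairwise distinct eigenvalues such that for each j the j-th compound A^(j) has the strong Perron–Frobenius property, then for each j the j-th compound of S⁻¹AS also has the strong Perron–Frobenius property. -/

import Mathlib

open Matrix Polynomial Filter

variable {n : ℕ}

/-- The minor of `A` with row set `r` and column set `c` (taken in increasing order). -/
noncomputable def minor (A : Matrix (Fin n) (Fin n) ℝ) (r c : Finset (Fin n))
    (h : c.card = r.card) : ℝ :=
  (A.submatrix (fun i : Fin r.card => (r.orderIsoOfFin rfl i).1)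
      (fun i : Fin r.card => (c.orderIsoOfFin h i).1)).det

/-- The `j`-th compound matrix of `A`: the matrix of all `j × j` minors of `A`,
indexed by the `j`-element subsets of `Fin n` (ordered increasingly). -/
noncomputable def compound (A : Matrix (Fin n) (Fin n) ℝ) (j : ℕ) :
    Matrix {s : Finset (Fin n) // s.card = j} {s : Finset (Fin n) // s.card = j} ℝ :=
  Matrix.of fun r c =>
    (A.submatrix (fun i : Fin j => (r.1.orderIsoOfFin r.2 i).1)
      (fun i : Fin j => (c.1.orderIsoOfFin c.2 i).1)).det

/-- Characteristic polynomial of a real matrix, viewed over `ℂ`. -/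
noncomputable def charC {m : Type*} [Fintype m] [DecidableEq m] (A : Matrix m m ℝ) :
    Polynomial ℂ :=
  (A.map (Complex.ofReal)).charpoly

/-- `lam` is a positive simple strictly dominant eigenvalue of `A` with a strictly
positive eigenvector (the strong Perron–Frobenius property, with specified value). -/
def StrongPFAt {m : Type*} [Fintype m] [DecidableEq m] (A : Matrix m m ℝ) (lam : ℝ) : Prop :=
  0 < lam ∧ (charC A).IsRoot (lam : ℂ) ∧ (charC A).rootMultiplicity (lam : ℂ) = 1 ∧
    (∀ μ : ℂ, (charC A).IsRoot μ → μ ≠ (lam : ℂ) → ‖μ‖ < lam) ∧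
    ∃ v : m → ℝ, (∀ i, 0 < v i) ∧ A *ᵥ v = lam • v

/-- The strong Perron–Frobenius property. -/
def StrongPF {m : Type*} [Fintype m] [DecidableEq m] (A : Matrix m m ℝ) : Prop :=
  ∃ lam : ℝ, StrongPFAt A lam

/-- `M` is strictly `J`-sign-symmetric (for the given set `J`). -/
def SJSWith (J : Finset (Fin n)) (M : Matrix (Fin n) (Fin n) ℝ) : Prop :=
  ∀ i j : Fin n, ((i ∈ J ↔ j ∈ J) → 0 < M i j) ∧ (¬(i ∈ J ↔ j ∈ J) → M i j < 0)

/-- `M` is strictly J-sign-symmetric for some `J ⊆ {1,…,n}`. -/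
def SJS (M : Matrix (Fin n) (Fin n) ℝ) : Prop :=
  ∃ J : Finset (Fin n), SJSWith J M

/-- Eventually strictly J-sign-symmetric. -/
def ESJS (A : Matrix (Fin n) (Fin n) ℝ) : Prop :=
  ∃ k0 : ℕ, ∀ k ≥ k0, SJS (A ^ k)

/-- Eventually (entrywise) positive. -/
def EvPos {m : Type*} [Fintype m] [DecidableEq m] (A : Matrix m m ℝ) : Prop :=
  ∃ k0 : ℕ, ∀ k ≥ k0, ∀ i j, 0 < (A ^ k) i j

/-- Strictly totally positive: all minors of all orders are positive. -/
def STP (A : Matrix (Fin n) (Fin n) ℝ) : Prop :=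
  ∀ (r c : Finset (Fin n)) (h : c.card = r.card), r.Nonempty → 0 < minor A r c h

/-- Totally nonnegative: all minors of all orders are nonnegative. -/
def TotNonneg (A : Matrix (Fin n) (Fin n) ℝ) : Prop :=
  ∀ (r c : Finset (Fin n)) (h : c.card = r.card), 0 ≤ minor A r c h

/-- Eventually strictly totally positive. -/
def ESTP (A : Matrix (Fin n) (Fin n) ℝ) : Prop :=
  ∃ k0 : ℕ, ∀ k ≥ k0, STP (A ^ k)

/-- The checkerboard transform `S* = ((-1)^(i+j) s_ij)`. -/
def checker (S : Matrix (Fin n) (Fin n) ℝ) : Matrix (Fin n) (Fin n) ℝ :=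
  Matrix.of fun i j => (-1 : ℝ) ^ ((i : ℕ) + (j : ℕ)) * S i j

/-- The exterior product `x₀ ∧ ⋯ ∧ x_{j-1}` of the first `j` of the vectors `x`,
as a vector indexed by `j`-element subsets of `Fin n`. -/
noncomputable def wedge (x : Fin n → Fin n → ℝ) (j : ℕ) (hj : j ≤ n) :
    {s : Finset (Fin n) // s.card = j} → ℝ :=
  fun s => (Matrix.of fun a b : Fin j => x (Fin.castLE hj b) (s.1.orderIsoOfFin s.2 a).1).det

/-!
Cauchy–Binet makes the compound multiplicative, so with `P = compound S j` and
`Q = compound S⁻¹ j = P⁻¹` we get `compound (S⁻¹ * A * S) j = Q * compound A j * P`.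
Jacobi's complementary minor formula reads `det S * minor S⁻¹ r c = minor (checker S) cᶜ rᶜ`,
so when `checker S` is totally nonnegative, `det S > 0` and `S⁻¹` is totally nonnegative,
whence `Q ≥ 0`. A similarity keeps the characteristic polynomial, and the nonnegative
matrix `Q`, having no zero row, maps the positive Perron vector of `compound A j` to a
positive eigenvector. Replacing `S` by `-S` does not change `S⁻¹ * A * S`.
-/

namespace Finset

lemma card_compl_eq_card_compl {α : Type*} [Fintype α] [DecidableEq α] {r c : Finset α}
    (h : c.card = r.card) : cᶜ.card = rᶜ.card := by
  simp [card_compl, h]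

lemma prod_orderEmbOfFin {α M : Type*} [LinearOrder α] [CommMonoid M] (s : Finset α)
    {k : ℕ} (h : s.card = k) (f : α → M) : ∏ i, f (s.orderEmbOfFin h i) = ∏ z ∈ s, f z := by
  conv_rhs => rw [← map_orderEmbOfFin_univ s h, prod_map]
  rfl

lemma image_orderEmbOfFin_comp_perm {α : Type*} [LinearOrder α] (s : Finset α) {k : ℕ}
    (h : s.card = k) (σ : Equiv.Perm (Fin k)) :
    univ.image (s.orderEmbOfFin h ∘ σ) = s := by
  rw [← image_image, image_univ_equiv, image_orderEmbOfFin_univ]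

lemma sum_filter_injective_eq_sum_sum_perm {ι β : Type*} [Fintype ι] [LinearOrder ι]
    [AddCommMonoid β] {k : ℕ} (F : (Fin k → ι) → β) :
    ∑ p ∈ univ.filter Function.Injective, F p =
      ∑ s : {s : Finset ι // s.card = k}, ∑ σ : Equiv.Perm (Fin k),
        F (s.1.orderEmbOfFin s.2 ∘ σ) := by
  rw [← sum_product']
  refine (sum_bij (fun x _ => x.1.1.orderEmbOfFin x.1.2 ∘ x.2) ?_ ?_ ?_ fun _ _ => rfl).symm
  · exact fun x _ => mem_filter.mpr ⟨mem_univ _,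
      (x.1.1.orderEmbOfFin x.1.2).injective.comp x.2.injective⟩
  · rintro ⟨⟨s, hs⟩, σ⟩ _ ⟨⟨s', hs'⟩, σ'⟩ _ heq
    obtain rfl : s = s' := by
      rw [← s.image_orderEmbOfFin_comp_perm hs σ, ← s'.image_orderEmbOfFin_comp_perm hs' σ']
      exact congrArg (univ.image ·) heq
    obtain rfl : σ = σ' := Equiv.ext fun i => (s.orderEmbOfFin hs).injective (congrFun heq i)
    rfl
  · intro p hp
    have hp : Function.Injective p := (mem_filter.mp hp).2
    set s := univ.image p
    have hs : s.card = k := by simp [s, card_image_of_injective _ hp]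
    have hmem : ∀ i, p i ∈ s := fun i => mem_image_of_mem p (mem_univ i)
    let g : Fin k → Fin k := fun i => (s.orderIsoOfFin hs).symm ⟨p i, hmem i⟩
    have hg : Function.Injective g := fun i j hij => hp <| by
      simpa [g] using congrArg (fun x => ((s.orderIsoOfFin hs) x : ι)) hij
    refine ⟨⟨⟨s, hs⟩, Equiv.ofBijective g hg.bijective_of_finite⟩, mem_univ _, ?_⟩
    funext i
    simp only [Function.comp_apply, Equiv.ofBijective_apply, g]
    rw [← coe_orderIsoOfFin_apply, OrderIso.apply_symm_apply]

lemma eq_of_isLowerSet_of_card_eq {α : Type*} [LinearOrder α] {r c : Finset α}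
    (hr : IsLowerSet (r : Set α)) (hc : IsLowerSet (c : Set α)) (h : c.card = r.card) : r = c := by
  rcases hr.total hc with hrc | hcr
  · exact eq_of_subset_of_card_le (coe_subset.mp hrc) h.le
  · exact (eq_of_subset_of_card_le (coe_subset.mp hcr) h.ge).symm

section ShufflePerm

variable {α : Type*} [LinearOrder α] [Fintype α] [DecidableEq α]

/-- The permutation mapping `c` onto `r` and `cᶜ` onto `rᶜ`, increasingly on each piece. -/
def shufflePerm (r c : Finset α) (h : c.card = r.card) : Equiv.Perm α :=
  (Equiv.sumCompl (· ∈ c)).symm.trans <|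
    (Equiv.sumCongr ((c.orderIsoOfFin rfl).symm.trans (r.orderIsoOfFin h.symm)).toEquiv <|
      (Equiv.subtypeEquivRight fun _ => mem_compl).symm.trans <|
        ((cᶜ.orderIsoOfFin rfl).symm.trans
          (rᶜ.orderIsoOfFin (card_compl_eq_card_compl h).symm)).toEquiv.trans
        (Equiv.subtypeEquivRight fun _ => mem_compl)).trans (Equiv.sumCompl (· ∈ r))

variable {r c : Finset α} (h : c.card = r.card)

lemma shufflePerm_orderEmbOfFin {k : ℕ} (hc : c.card = k) (hr : r.card = k) (i : Fin k) :
    shufflePerm r c h (c.orderEmbOfFin hc i) = r.orderEmbOfFin hr i := by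
  subst hc
  simp [shufflePerm, Equiv.sumCompl_symm_apply_of_pos, orderEmbOfFin_mem, OrderIso.symm_apply_eq,
    Subtype.ext_iff]

lemma shufflePerm_orderEmbOfFin_compl {k : ℕ} (hc : cᶜ.card = k) (hr : rᶜ.card = k) (i : Fin k) :
    shufflePerm r c h (cᶜ.orderEmbOfFin hc i) = rᶜ.orderEmbOfFin hr i := by
  subst hc
  have := mem_compl.mp (cᶜ.orderEmbOfFin_mem rfl i)
  simp [shufflePerm, Equiv.sumCompl_symm_apply_of_neg, this, OrderIso.symm_apply_eq,
    Subtype.ext_iff]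

lemma eq_shufflePerm {σ : Equiv.Perm α}
    (hσ : ∀ i, σ (c.orderEmbOfFin rfl i) = r.orderEmbOfFin h.symm i)
    (hσ' : ∀ i, σ (cᶜ.orderEmbOfFin rfl i) = rᶜ.orderEmbOfFin (card_compl_eq_card_compl h).symm i) :
    σ = shufflePerm r c h := by
  ext x
  by_cases hx : x ∈ c
  · obtain ⟨i, rfl⟩ : x ∈ Set.range (c.orderEmbOfFin rfl) := by simpa using hx
    rw [hσ, shufflePerm_orderEmbOfFin]
  · obtain ⟨i, rfl⟩ : x ∈ Set.range (cᶜ.orderEmbOfFin rfl) := by simpa using hx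
    rw [hσ', shufflePerm_orderEmbOfFin_compl]

lemma shufflePerm_self (c : Finset α) : shufflePerm c c rfl = 1 :=
  (eq_shufflePerm rfl (fun _ => rfl) fun _ => rfl).symm

lemma shufflePerm_mul {b : Finset α} (hbc : c.card = b.card) (hrb : b.card = r.card) :
    shufflePerm r b hrb * shufflePerm b c hbc = shufflePerm r c (hbc.trans hrb) :=
  eq_shufflePerm _
    (fun i => by
      rw [Equiv.Perm.mul_apply, shufflePerm_orderEmbOfFin _ _ hbc.symm, shufflePerm_orderEmbOfFin])
    fun i => by
      rw [Equiv.Perm.mul_apply,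
        shufflePerm_orderEmbOfFin_compl _ _ (card_compl_eq_card_compl hbc).symm,
        shufflePerm_orderEmbOfFin_compl]

lemma shufflePerm_inv : (shufflePerm r c h)⁻¹ = shufflePerm c r h.symm :=
  inv_eq_of_mul_eq_one_left <| by rw [shufflePerm_mul, shufflePerm_self]

lemma shufflePerm_map_self {s : Finset α} (σ : Equiv.Perm α) (hσ : StrictMonoOn σ s)
    (hσ' : StrictMonoOn σ ↑sᶜ) : shufflePerm (s.map σ.toEmbedding) s (card_map _).symm = σ := by
  refine (eq_shufflePerm _ (fun i => ?_) fun i => ?_).symm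
  · have := orderEmbOfFin_unique (s := s.map σ.toEmbedding) (card_map _)
      (f := σ ∘ s.orderEmbOfFin rfl) (fun i => by simp [orderEmbOfFin_mem])
      fun i j hij => hσ (orderEmbOfFin_mem _ _ i) (orderEmbOfFin_mem _ _ j)
        ((s.orderEmbOfFin rfl).strictMono hij)
    exact congrFun this i
  · have := orderEmbOfFin_unique (s := (s.map σ.toEmbedding)ᶜ)
      (by rw [card_compl, card_compl, card_map]) (f := σ ∘ sᶜ.orderEmbOfFin rfl)
      (fun i => by
        rw [Function.comp_apply, mem_compl, mem_map_equiv, Equiv.symm_apply_apply]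
        exact mem_compl.mp (orderEmbOfFin_mem sᶜ rfl i))
      fun i j hij => hσ' (orderEmbOfFin_mem _ _ i) (orderEmbOfFin_mem _ _ j)
        ((sᶜ.orderEmbOfFin rfl).strictMono hij)
    exact congrFun this i

end ShufflePerm

end Finset

section SignShufflePerm

open Finset

lemma strictMonoOn_swap_of_succ_eq {s : Set (Fin n)} {x y : Fin n} (hx : x ∈ s) (hy : y ∉ s)
    (hxy : (x : ℕ) + 1 = y ∨ (y : ℕ) + 1 = x) : StrictMonoOn (Equiv.swap x y) s := by
  intro a ha b hb hab
  have hay : a ≠ y := fun h => hy (h ▸ ha)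
  have hby : b ≠ y := fun h => hy (h ▸ hb)
  have hay' := Fin.val_ne_of_ne hay
  have hby' := Fin.val_ne_of_ne hby
  simp only [Equiv.swap_apply_def, hay, hby, if_false]
  rw [Fin.lt_def] at hab ⊢
  split_ifs with h1 h2 h2 <;> subst_vars <;> omega

lemma isLowerSet_of_forall_pred_mem {s : Finset (Fin n)}
    (hs : ∀ x ∈ s, ∀ y : Fin n, (y : ℕ) + 1 = x → y ∈ s) : IsLowerSet (s : Set (Fin n)) := by
  suffices ∀ d, ∀ x ∈ s, ∀ y : Fin n, (y : ℕ) + d = x → y ∈ s from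
    fun x y hyx hx => this _ x hx y (Nat.add_sub_of_le (Fin.le_def.mp hyx))
  intro d
  induction d with
  | zero =>
    intro x hx y hyx
    obtain rfl : y = x := Fin.ext (by simpa using hyx)
    exact hx
  | succ d ih =>
    intro x hx y hyx
    exact ih ⟨y + d, by omega⟩ (hs x hx _ (by simp; omega)) y rfl

lemma sum_val_map_swap {s : Finset (Fin n)} {x y : Fin n} (hx : x ∈ s) (hy : y ∉ s)
    (hxy : (y : ℕ) + 1 = x) :
    ∑ z ∈ s.map (Equiv.swap x y).toEmbedding, (z : ℕ) + 1 = ∑ z ∈ s, (z : ℕ) := by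
  simp only [sum_map, Equiv.toEmbedding_apply]
  rw [← add_sum_erase s _ hx, ← add_sum_erase s _ hx]
  have : ∀ z ∈ s.erase x, Equiv.swap x y z = z := fun z hz =>
    Equiv.swap_apply_of_ne_of_ne (ne_of_mem_erase hz) fun h => hy (h ▸ mem_of_mem_erase hz)
  rw [sum_congr rfl fun z hz => congrArg Fin.val (this z hz)]
  simp only [Equiv.swap_apply_left]
  omega

lemma sign_shufflePerm_of_succ_eq {r c : Finset (Fin n)} (h : c.card = r.card) {x y : Fin n}
    (hx : x ∈ c) (hy : y ∉ c) (hxy : (y : ℕ) + 1 = x) :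
    Equiv.Perm.sign (shufflePerm r c h) =
      -Equiv.Perm.sign
        (shufflePerm r (c.map (Equiv.swap x y).toEmbedding) ((card_map _).trans h)) := by
  have hswap := shufflePerm_map_self (Equiv.swap x y)
    (strictMonoOn_swap_of_succ_eq (s := (c : Set (Fin n))) hx hy (Or.inr hxy))
    (by
      rw [Equiv.swap_comm]
      exact strictMonoOn_swap_of_succ_eq (by simpa using hy) (by simpa using hx) (Or.inl hxy))
  have hne : x ≠ y := by rintro rfl; omega
  rw [← shufflePerm_mul (card_map _).symm, hswap, Equiv.Perm.sign_mul, Equiv.Perm.sign_swap hne,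
    mul_neg_one]

theorem sign_shufflePerm {r c : Finset (Fin n)} (h : c.card = r.card) :
    Equiv.Perm.sign (shufflePerm r c h) = (-1) ^ (∑ z ∈ r, (z : ℕ) + ∑ z ∈ c, (z : ℕ)) := by
  induction hN : ∑ z ∈ r, (z : ℕ) + ∑ z ∈ c, (z : ℕ) using Nat.strong_induction_on
    generalizing r c with
  | _ N ih =>
  subst hN
  -- Moving an element of `r` or `c` one step down flips the sign and lowers the exponent by one;
  -- when no such move exists, `r` and `c` are initial segments of the same size, hence equal.
  by_cases hc : ∃ x ∈ c, ∃ y ∉ c, (y : ℕ) + 1 = x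
  · obtain ⟨x, hx, y, hy, hxy⟩ := hc
    have hsum := sum_val_map_swap hx hy hxy
    rw [sign_shufflePerm_of_succ_eq h hx hy hxy, ih _ (by omega) _ rfl, ← hsum, ← add_assoc,
      pow_succ, mul_neg_one]
  by_cases hr : ∃ x ∈ r, ∃ y ∉ r, (y : ℕ) + 1 = x
  · obtain ⟨x, hx, y, hy, hxy⟩ := hr
    have hsum := sum_val_map_swap hx hy hxy
    rw [← Equiv.Perm.sign_inv, shufflePerm_inv, sign_shufflePerm_of_succ_eq h.symm hx hy hxy,
      ih _ (by omega) _ rfl, ← hsum, add_right_comm, pow_succ, mul_neg_one, add_comm]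
  have hlower : ∀ s : Finset (Fin n), ¬(∃ x ∈ s, ∃ y ∉ s, (y : ℕ) + 1 = x) →
      IsLowerSet (s : Set (Fin n)) := fun s hs =>
    isLowerSet_of_forall_pred_mem fun x hx y hyx => by_contra fun hy => hs ⟨x, hx, y, hy, hyx⟩
  obtain rfl := eq_of_isLowerSet_of_card_eq (hlower r hr) (hlower c hc) h
  rw [shufflePerm_self, map_one, ← two_mul, pow_mul, Int.units_sq, one_pow]

end SignShufflePerm

namespace Matrix

variable {R ι : Type*} [CommRing R] [Fintype ι] {k : ℕ}

lemma det_mul_eq_sum_fun (M : Matrix (Fin k) ι R) (N : Matrix ι (Fin k) R) :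
    (M * N).det = ∑ p : Fin k → ι, (M.submatrix id p).det * ∏ i, N (p i) i := by
  have hexpand : ∀ σ : Equiv.Perm (Fin k), ∏ i, (M * N) (σ i) i =
      ∑ p : Fin k → ι, ∏ i, M (σ i) (p i) * N (p i) i := fun σ => by
    simp only [mul_apply]
    rw [Finset.prod_univ_sum, Fintype.piFinset_univ]
  rw [det_apply']
  simp_rw [hexpand, Finset.mul_sum]
  rw [Finset.sum_comm]
  refine Finset.sum_congr rfl fun p _ => ?_
  rw [det_apply', Finset.sum_mul]
  refine Finset.sum_congr rfl fun σ _ => ?_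
  rw [Finset.prod_mul_distrib]
  simp [mul_assoc]

variable [LinearOrder ι]

theorem det_mul_eq_sum_det_mul_det (M : Matrix (Fin k) ι R) (N : Matrix ι (Fin k) R) :
    (M * N).det = ∑ s : {s : Finset ι // s.card = k},
      (M.submatrix id (s.1.orderEmbOfFin s.2)).det *
        (N.submatrix (s.1.orderEmbOfFin s.2) id).det := by
  have hnoninj : ∀ p : Fin k → ι, ¬Function.Injective p → (M.submatrix id p).det = 0 := by
    intro p hp
    obtain ⟨i, j, hpij, hij⟩ : ∃ i j, p i = p j ∧ i ≠ j := by
      simpa [Function.Injective] using hp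
    exact det_zero_of_column_eq hij fun l => by simp [hpij]
  have hperm : ∀ s : {s : Finset ι // s.card = k},
      (M.submatrix id (s.1.orderEmbOfFin s.2)).det * (N.submatrix (s.1.orderEmbOfFin s.2) id).det =
      ∑ σ : Equiv.Perm (Fin k), (M.submatrix id (s.1.orderEmbOfFin s.2 ∘ σ)).det *
        ∏ i, N (s.1.orderEmbOfFin s.2 (σ i)) i := fun s => by
    rw [det_apply' (N.submatrix _ id), Finset.mul_sum]
    refine Finset.sum_congr rfl fun σ _ => ?_
    have : M.submatrix id (s.1.orderEmbOfFin s.2 ∘ σ) =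
        (M.submatrix id (s.1.orderEmbOfFin s.2)).submatrix id σ := rfl
    rw [this, det_permute']
    simp [mul_assoc, mul_left_comm]
  rw [det_mul_eq_sum_fun, ← Finset.sum_filter_of_ne fun p _ hp =>
    by_contra fun hinj => hp (by rw [hnoninj p hinj, zero_mul])]
  simp_rw [hperm]
  rw [Finset.sum_filter_injective_eq_sum_sum_perm]
  rfl

lemma det_eq_det_submatrix_of_cols_eq_one [DecidableEq ι] (B : Matrix ι ι R) (c : Finset ι)
    (hB : ∀ p ∉ c, ∀ i, B i p = (1 : Matrix ι ι R) i p) :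
    B.det = (B.submatrix (c.orderEmbOfFin rfl) (c.orderEmbOfFin rfl)).det := by
  rw [twoBlockTriangular_det' B (· ∈ c) fun i hi j hj => by
    rw [hB j hj, one_apply_ne (by rintro rfl; exact hj hi)]]
  have hone : toSquareBlockProp B (· ∉ c) = 1 := by
    ext i j
    simp only [toSquareBlockProp_def, of_apply, hB j j.2, one_apply, Subtype.ext_iff]
  let e : Fin c.card ≃ {i // i ∈ c} := (c.orderIsoOfFin rfl).toEquiv
  rw [hone, det_one, mul_one]
  convert (det_submatrix_equiv_self e (toSquareBlockProp B (· ∈ c))).symm using 2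
  ext i j
  simp [e, toSquareBlockProp_def]

end Matrix

section Jacobi

variable {R : Type*} [CommRing R]

open Finset

theorem Matrix.det_mul_det_inv_submatrix (S : Matrix (Fin n) (Fin n) R) (hS : IsUnit S.det)
    {r c : Finset (Fin n)} (h : c.card = r.card) :
    S.det * (S⁻¹.submatrix (r.orderEmbOfFin h.symm) (c.orderEmbOfFin rfl)).det =
      (-1) ^ (∑ z ∈ r, (z : ℕ) + ∑ z ∈ c, (z : ℕ)) *
        (S.submatrix (cᶜ.orderEmbOfFin rfl)
          (rᶜ.orderEmbOfFin (card_compl_eq_card_compl h).symm)).det := by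
  set σ := shufflePerm r c h
  -- `det M = ± det S⁻¹[r, c]`, and `S * M` has unit columns on `c`,
  -- so `det (S * M) = det S[cᶜ, rᶜ]`.
  let M : Matrix (Fin n) (Fin n) R :=
    of fun i p => if p ∈ c then S⁻¹ i p else (1 : Matrix (Fin n) (Fin n) R) i (σ p)
  have hM : (M.submatrix σ id).det =
      (S⁻¹.submatrix (r.orderEmbOfFin h.symm) (c.orderEmbOfFin rfl)).det := by
    rw [det_eq_det_submatrix_of_cols_eq_one _ c fun p hp i => by
      simp [M, hp, one_apply, σ.injective.eq_iff]]
    congr 1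
    ext i j
    simp only [M, submatrix_apply, of_apply, id, σ]
    rw [shufflePerm_orderEmbOfFin _ _ h.symm, if_pos (orderEmbOfFin_mem _ _ j)]
  have hSM : (S * M).det = (S.submatrix (cᶜ.orderEmbOfFin rfl)
      (rᶜ.orderEmbOfFin (card_compl_eq_card_compl h).symm)).det := by
    rw [det_eq_det_submatrix_of_cols_eq_one _ cᶜ fun p hp i => ?_]
    · congr 1
      ext i j
      have hj : cᶜ.orderEmbOfFin rfl j ∉ c := mem_compl.mp (orderEmbOfFin_mem _ _ j)
      simp only [one_apply, submatrix_apply, mul_apply, of_apply, hj, ↓reduceIte, mul_ite, mul_one,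
        mul_zero, sum_ite_eq', mem_univ, M, σ]
      rw [shufflePerm_orderEmbOfFin_compl]
    · have hp : p ∈ c := by simpa using hp
      rw [← mul_nonsing_inv S hS]
      simp [M, mul_apply, hp]
  rw [det_permute] at hM
  rw [← hM, ← hSM, det_mul, ← mul_assoc, mul_left_comm, sign_shufflePerm h]
  push_cast
  ring

end Jacobi

section Compound

open Finset

lemma minor_eq_det_submatrix (A : Matrix (Fin n) (Fin n) ℝ) {r c : Finset (Fin n)}
    (h : c.card = r.card) {k : ℕ} (hr : r.card = k) (hc : c.card = k) :
    minor A r c h = (A.submatrix (r.orderEmbOfFin hr) (c.orderEmbOfFin hc)).det := by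
  subst hr
  rfl

lemma compound_apply (A : Matrix (Fin n) (Fin n) ℝ) (j : ℕ)
    (r c : {s : Finset (Fin n) // s.card = j}) :
    compound A j r c = (A.submatrix (r.1.orderEmbOfFin r.2) (c.1.orderEmbOfFin c.2)).det :=
  rfl

lemma compound_mul (A B : Matrix (Fin n) (Fin n) ℝ) (j : ℕ) :
    compound (A * B) j = compound A j * compound B j := by
  ext r c
  rw [compound_apply, mul_apply,
    show (A * B).submatrix (r.1.orderEmbOfFin r.2) (c.1.orderEmbOfFin c.2) =
      A.submatrix (r.1.orderEmbOfFin r.2) id * B.submatrix id (c.1.orderEmbOfFin c.2) from rfl,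
    det_mul_eq_sum_det_mul_det]
  rfl

lemma compound_one (j : ℕ) : compound (1 : Matrix (Fin n) (Fin n) ℝ) j = 1 := by
  ext r c
  rw [compound_apply]
  by_cases hrc : r = c
  · subst hrc
    rw [submatrix_one _ (r.1.orderEmbOfFin r.2).injective, det_one, one_apply_eq]
  · obtain ⟨x, hxr, hxc⟩ : ∃ x ∈ r.1, x ∉ c.1 := not_subset.mp fun hsub =>
      hrc (Subtype.ext (eq_of_subset_of_card_le hsub (by rw [r.2, c.2])))
    obtain ⟨i, rfl⟩ : x ∈ Set.range (r.1.orderEmbOfFin r.2) := by simpa using hxr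
    rw [one_apply_ne hrc]
    refine det_eq_zero_of_row_eq_zero i fun l => one_apply_ne fun h => hxc ?_
    exact h ▸ orderEmbOfFin_mem _ _ l

lemma det_checker_submatrix (S : Matrix (Fin n) (Fin n) ℝ) {r c : Finset (Fin n)} {k : ℕ}
    (hr : r.card = k) (hc : c.card = k) :
    ((checker S).submatrix (r.orderEmbOfFin hr) (c.orderEmbOfFin hc)).det =
      (-1) ^ (∑ z ∈ r, (z : ℕ) + ∑ z ∈ c, (z : ℕ)) *
        (S.submatrix (r.orderEmbOfFin hr) (c.orderEmbOfFin hc)).det := by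
  have : (checker S).submatrix (r.orderEmbOfFin hr) (c.orderEmbOfFin hc) =
      of fun i j => (-1 : ℝ) ^ (r.orderEmbOfFin hr i : ℕ) *
        (of fun i j => (-1 : ℝ) ^ (c.orderEmbOfFin hc j : ℕ) *
          S.submatrix (r.orderEmbOfFin hr) (c.orderEmbOfFin hc) i j) i j := by
    ext i j
    simp only [submatrix_apply, checker, of_apply, pow_add]
    ring
  rw [this, det_mul_column, det_mul_row, prod_orderEmbOfFin r hr (fun z => (-1 : ℝ) ^ (z : ℕ)),
    prod_orderEmbOfFin c hc (fun z => (-1 : ℝ) ^ (z : ℕ)), prod_pow_eq_pow_sum,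
    prod_pow_eq_pow_sum, ← mul_assoc, ← pow_add]

theorem det_mul_minor_inv (S : Matrix (Fin n) (Fin n) ℝ) (hS : IsUnit S.det)
    {r c : Finset (Fin n)} (h : c.card = r.card) :
    S.det * minor S⁻¹ r c h = minor (checker S) cᶜ rᶜ (card_compl_eq_card_compl h).symm := by
  have hparity : Even ((∑ z ∈ r, (z : ℕ) + ∑ z ∈ c, (z : ℕ)) +
      (∑ z ∈ cᶜ, (z : ℕ) + ∑ z ∈ rᶜ, (z : ℕ))) := by
    have := sum_add_sum_compl r fun z : Fin n => (z : ℕ)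
    have := sum_add_sum_compl c fun z : Fin n => (z : ℕ)
    exact ⟨∑ z : Fin n, (z : ℕ), by omega⟩
  rw [minor_eq_det_submatrix _ _ h.symm rfl, det_mul_det_inv_submatrix S hS h,
    minor_eq_det_submatrix _ _ rfl (card_compl_eq_card_compl h).symm, det_checker_submatrix,
    neg_one_pow_congr (Nat.even_add.mp hparity)]

lemma totNonneg_inv_of_totNonneg_checker {S : Matrix (Fin n) (Fin n) ℝ} (hS : IsUnit S.det)
    (hTN : TotNonneg (checker S)) : TotNonneg S⁻¹ := by
  have hdet : 0 < S.det := by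
    -- the empty minor of `S⁻¹` is `1`, so `det S` is the full minor of `checker S`
    have h := det_mul_minor_inv S hS (r := ∅) (c := ∅) rfl
    rw [minor_eq_det_submatrix _ _ (k := 0) rfl rfl, det_fin_zero, mul_one] at h
    exact lt_of_le_of_ne (h ▸ hTN _ _ _) hS.ne_zero.symm
  exact fun r c h => nonneg_of_mul_nonneg_right (det_mul_minor_inv S hS h ▸ hTN _ _ _) hdet

lemma compound_nonneg_of_totNonneg {A : Matrix (Fin n) (Fin n) ℝ} (hA : TotNonneg A) (j : ℕ)
    (r c : {s : Finset (Fin n) // s.card = j}) : 0 ≤ compound A j r c := by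
  rw [compound_apply, ← minor_eq_det_submatrix A (c.2.trans r.2.symm)]
  exact hA _ _ _

end Compound

section StrongPF

variable {m : Type*} [Fintype m] [DecidableEq m]

lemma charC_conj {M P Q : Matrix m m ℝ} (hPQ : P * Q = 1) : charC (Q * M * P) = charC M := by
  simp only [charC, show ∀ B : Matrix m m ℝ, B.map Complex.ofReal = B.map Complex.ofRealHom from
    fun _ => rfl, charpoly_map]
  rw [mul_assoc, charpoly_mul_comm, mul_assoc, hPQ, mul_one]

lemma StrongPFAt.conj_of_inv_nonneg {M P Q : Matrix m m ℝ} {lam : ℝ} (hM : StrongPFAt M lam)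
    (hPQ : P * Q = 1) (hQ : ∀ a b, 0 ≤ Q a b) : StrongPFAt (Q * M * P) lam := by
  obtain ⟨hpos, hroot, hmult, hdom, v, hv, heig⟩ := hM
  rw [← charC_conj (M := M) hPQ] at hroot hmult hdom
  refine ⟨hpos, hroot, hmult, hdom, Q *ᵥ v, fun a => ?_, ?_⟩
  · obtain ⟨b, hb⟩ : ∃ b, Q a b ≠ 0 := by
      by_contra! hrow
      have hQP : Q * P = 1 := mul_eq_one_comm.mp hPQ
      have := congrFun (congrFun hQP a) a
      simp [mul_apply, hrow] at this
    exact Finset.sum_pos' (fun b _ => mul_nonneg (hQ a b) (hv b).le)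
      ⟨b, Finset.mem_univ b, mul_pos ((hQ a b).lt_of_ne' hb) (hv b)⟩
  · rw [mulVec_mulVec, mul_assoc, mul_assoc, hPQ, mul_one, ← mulVec_mulVec, heig, mulVec_smul]

end StrongPF

theorem strongPF_compound_conj {S A : Matrix (Fin n) (Fin n) ℝ} (hS : IsUnit S.det)
    (hTN : TotNonneg (checker S)) {j : ℕ} (hA : StrongPF (compound A j)) :
    StrongPF (compound (S⁻¹ * A * S) j) := by
  obtain ⟨lam, hlam⟩ := hA
  rw [compound_mul, compound_mul]
  exact ⟨lam, hlam.conj_of_inv_nonneg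
    (by rw [← compound_mul, mul_nonsing_inv _ hS, compound_one])
    (compound_nonneg_of_totNonneg (totNonneg_inv_of_totNonneg_checker hS hTN) j)⟩

theorem stmt16_general (S A : Matrix (Fin n) (Fin n) ℝ) (hS : IsUnit S.det)
    (hTSA : TotNonneg (checker S) ∨ TotNonneg (checker (-S)))
    (hPF : ∀ j : ℕ, 1 ≤ j → j ≤ n → StrongPF (compound A j)) :
    ∀ j : ℕ, 1 ≤ j → j ≤ n → StrongPF (compound (S⁻¹ * A * S) j) := by
  intro j hj1 hjn
  rcases hTSA with hTN | hTN
  · exact strongPF_compound_conj hS hTN (hPF j hj1 hjn)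
  · have hS' : IsUnit (-S).det := by
      rw [det_neg]
      exact ((isUnit_one.neg).pow _).mul hS
    have hconj : (-S)⁻¹ * A * (-S) = S⁻¹ * A * S := by
      rw [inv_eq_left_inv (B := -S⁻¹) (by rw [neg_mul_neg, nonsing_inv_mul S hS]), neg_mul,
        mul_neg, neg_mul, neg_neg]
    exact hconj ▸ strongPF_compound_conj hS' hTN (hPF j hj1 hjn)

/-- similarity by a totally sign-alternating matrix (or the negative
of one) preserves the Gantmacher–Krein property (strong Perron–Frobenius property of
all compounds). -/
theorem stmt16 (S A : Matrix (Fin n) (Fin n) ℝ) (hS : IsUnit S.det)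
    (hTSA : TotNonneg (checker S) ∨ TotNonneg (checker (-S)))
    (lam : Fin n → ℝ) (hanti : StrictAnti lam) (hpos : ∀ i, 0 < lam i)
    (hchar : charC A = ∏ i : Fin n, (X - C (lam i : ℂ)))
    (hPF : ∀ j : ℕ, 1 ≤ j → j ≤ n → StrongPF (compound A j)) :
    ∀ j : ℕ, 1 ≤ j → j ≤ n → StrongPF (compound (S⁻¹ * A * S) j) :=
  stmt16_general S A hS hTSA hPF
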